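/- Let P = ℂ[x,y,z,t], let F ∈ ℂ[x,y,t] be an irreducible homogeneous form of degree d ≥ 1, and let 𝒫 = (z, F) ⊆ P, which is a homogeneous prime ideal. Let Q ⊆ P be a homogeneous 𝒫-primary ideal and let e ≥ 1 be its multiplicity, i.e., the length of (P/Q)_𝒫 over the local ring P_𝒫. Then there is a nonempty Zariski-open subset U ⊆ ℂ^3 such that for every (α,β,γ) ∈ U, setting ℓ = αx + βy + γz + t, the following holds: if z ∈ Q + ℓP, then for all sufficiently large n one has (Q + ℓP)_n = (zP + F^e·P + ℓP)_n; equivalently, the image of Q in P/ℓP agrees in all sufficiently high degrees with the ideal (z̄, f̄^e), where z̄ and f̄ denote the images of z and F. -/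
import Mathlib


open MvPolynomial

/-- The prime ideal `𝒫 = (z, F)` of `P = ℂ[x,y,z,t]`;
the variables `x, y, z, t` are `X 0, X 1, X 2, X 3`. -/
noncomputable def curvePrime (F : MvPolynomial (Fin 4) ℂ) : Ideal (MvPolynomial (Fin 4) ℂ) :=
  Ideal.span {X 2, F}

/-- The linear form `ℓ = αx + βy + γz + t` in `ℂ[x,y,z,t]`. -/
noncomputable def lform (α β γ : ℂ) : MvPolynomial (Fin 4) ℂ :=
  C α * X 0 + C β * X 1 + C γ * X 2 + X 3

open Finset in
lemma hc_mul_homog {σ R : Type*} [CommRing R] (g h : MvPolynomial σ R) {d : ℕ}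
    (hh : h ∈ homogeneousSubmodule σ R d) (n : ℕ) (hdn : d ≤ n) :
    homogeneousComponent n (g * h) = homogeneousComponent (n - d) g * h := by
  conv_lhs => rw [← sum_homogeneousComponent g]
  rw [Finset.sum_mul, map_sum]
  have key : ∀ k, homogeneousComponent n (homogeneousComponent k g * h)
      = if n - d = k then homogeneousComponent k g * h else 0 := by
    intro k
    have hk : (homogeneousComponent k g * h) ∈ homogeneousSubmodule σ R (k + d) :=
      (homogeneousComponent_isHomogeneous k g).mul hh
    rw [homogeneousComponent_of_mem hk]
    congr 1
    simp only [eq_iff_iff]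
    omega
  simp_rw [key]
  rw [Finset.sum_ite_eq (Finset.range (g.totalDegree + 1)) (n - d)
    (fun k => homogeneousComponent k g * h)]
  split_ifs with hmem
  · rfl
  · rw [Finset.mem_range, not_lt] at hmem
    rw [homogeneousComponent_eq_zero _ _ (by omega), zero_mul]

open Finset in
lemma hc_mul_homog' {σ R : Type*} [CommRing R] (g h : MvPolynomial σ R) {d : ℕ}
    (hh : h ∈ homogeneousSubmodule σ R d) (n : ℕ) (hdn : n < d) :
    homogeneousComponent n (g * h) = 0 := by
  conv_lhs => rw [← sum_homogeneousComponent g]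
  rw [Finset.sum_mul, map_sum]
  have key : ∀ k, homogeneousComponent n (homogeneousComponent k g * h) = 0 := by
    intro k
    have hk : (homogeneousComponent k g * h) ∈ homogeneousSubmodule σ R (k + d) :=
      (homogeneousComponent_isHomogeneous k g).mul hh
    rw [homogeneousComponent_of_mem hk, if_neg (by omega)]
  simp_rw [key]
  exact Finset.sum_const_zero

lemma generic_lform (F : MvPolynomial (Fin 4) ℂ) (d : ℕ) (hd : 1 ≤ d)
    (hFd : F ∈ homogeneousSubmodule (Fin 4) ℂ d)
    (hFz : (2 : Fin 4) ∉ F.vars) :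
    ∃ p : MvPolynomial (Fin 3) ℂ, p ≠ 0 ∧
      ∀ α β γ : ℂ, eval (![α, β, γ] : Fin 3 → ℂ) p ≠ 0 →
        lform α β γ ∉ curvePrime F := by
  classical
  set a := coeff (Finsupp.single (0 : Fin 4) 1) F with ha
  set c := coeff (Finsupp.single (3 : Fin 4) 1) F with hc
  refine ⟨if c = 0 then 1 else C c * X 0 - C a, ?_, ?_⟩
  · split_ifs with h
    · exact one_ne_zero
    · intro h0
      have hs : (Finsupp.single (0 : Fin 3) 1 : Fin 3 →₀ ℕ) ≠ 0 := by
        simp [Finsupp.single_eq_zero]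
      have : coeff (Finsupp.single (0 : Fin 3) 1) (C c * X (0:Fin 3) - C a) = c := by
        rw [coeff_sub, coeff_C_mul, coeff_X', if_pos rfl, coeff_C,
          if_neg (fun hh => hs hh.symm), mul_one, sub_zero]
      rw [h0, coeff_zero] at this
      exact h this.symm
  · intro α β γ hp hmem
    -- the substitution killing z
    set ψ : MvPolynomial (Fin 4) ℂ →ₐ[ℂ] MvPolynomial (Fin 4) ℂ :=
      aeval (fun i : Fin 4 => if i = 2 then 0 else X i) with hψ
    have hψF : ψ F = F := by
      show (ψ : MvPolynomial (Fin 4) ℂ →+* MvPolynomial (Fin 4) ℂ) F = RingHom.id _ F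
      apply hom_congr_vars
      · ext r
        simp [hψ]
      · intro i hiF _
        have : i ≠ 2 := fun h => hFz (h ▸ hiF)
        simp [hψ, aeval_X, this]
      · rfl
    rw [curvePrime, Ideal.mem_span_pair] at hmem
    obtain ⟨u, v, huv⟩ := hmem
    have happ := congrArg ψ huv
    have hψ2 : ψ (X 2) = 0 := by simp [hψ]
    rw [map_add, map_mul, map_mul, hψ2, mul_zero, zero_add, hψF] at happ
    have hψl : ψ (lform α β γ) = C α * X 0 + C β * X 1 + X 3 := by
      simp [hψ, lform, algebraMap_eq]
    rw [hψl] at happ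
    -- ℓ' = ψ v * F
    set ℓ' : MvPolynomial (Fin 4) ℂ := C α * X 0 + C β * X 1 + X 3 with hℓ'
    have hℓhom : ℓ' ∈ homogeneousSubmodule (Fin 4) ℂ 1 := by
      refine Submodule.add_mem _ (Submodule.add_mem _ ?_ ?_) (isHomogeneous_X _ _)
      · simpa using (isHomogeneous_C (Fin 4) α).mul (isHomogeneous_X ℂ (0 : Fin 4))
      · simpa using (isHomogeneous_C (Fin 4) β).mul (isHomogeneous_X ℂ (1 : Fin 4))
    have hcoe3 : coeff (Finsupp.single (3 : Fin 4) 1) ℓ' = 1 := by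
      simp [hℓ', coeff_add, coeff_C_mul, coeff_X', Finsupp.single_eq_single_iff]
    have hcoe0 : coeff (Finsupp.single (0 : Fin 4) 1) ℓ' = α := by
      simp [hℓ', coeff_add, coeff_C_mul, coeff_X', Finsupp.single_eq_single_iff]
    have happ1 := congrArg (homogeneousComponent 1) happ
    rw [homogeneousComponent_of_mem hℓhom, if_pos rfl] at happ1
    rcases eq_or_lt_of_le hd with hd1 | hd2
    · -- d = 1
      rw [hc_mul_homog _ _ hFd 1 hd1.ge] at happ1
      rw [← hd1] at happ1
      rw [homogeneousComponent_zero] at happ1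
      set lam := coeff 0 (ψ v) with hlam
      have h3 := congrArg (coeff (Finsupp.single (3 : Fin 4) 1)) happ1
      rw [hcoe3, coeff_C_mul] at h3
      have h0 := congrArg (coeff (Finsupp.single (0 : Fin 4) 1)) happ1
      rw [hcoe0, coeff_C_mul] at h0
      -- 1 = lam * c,  α = lam * a
      rw [← hc] at h3
      rw [← ha] at h0
      have hcne : c ≠ 0 := by
        intro h
        rw [h, mul_zero] at h3
        exact one_ne_zero h3.symm
      rw [if_neg hcne] at hp
      apply hp
      have heval : eval (![α, β, γ] : Fin 3 → ℂ) (C c * X 0 - C a) = c * α - a := by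
        simp
      rw [heval, ← h0]
      calc c * (lam * a) - a = (lam * c) * a - a := by ring
        _ = 0 := by rw [h3]; ring
    · -- d ≥ 2
      rw [hc_mul_homog' _ _ hFd 1 hd2] at happ1
      have := congrArg (coeff (Finsupp.single (3 : Fin 4) 1)) happ1
      rw [hcoe3] at this
      simp at this

abbrev RR := MvPolynomial (Fin 4) ℂ

set_option maxHeartbeats 1000000 in
set_option synthInstance.maxHeartbeats 400000 in
lemma primary_structure (F : MvPolynomial (Fin 4) ℂ)
    [hPP : (curvePrime F).IsPrime]
    (Q : Ideal (MvPolynomial (Fin 4) ℂ))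
    (hQprimary : Q.IsPrimary) (hQrad : Q.radical = curvePrime F)
    (e : ℕ)
    (hlen : ∃ s : CompositionSeries (Submodule (Localization.AtPrime (curvePrime F))
        (LocalizedModule (curvePrime F).primeCompl (MvPolynomial (Fin 4) ℂ ⧸ Q))),
      s.head = ⊥ ∧ s.last = ⊤ ∧ s.length = e)
    (hz : X 2 ∈ Q) : Q = Ideal.span {X 2, F ^ e} := by
  classical
  set P : Ideal RR := curvePrime F with hP
  have hQle : Q ≤ P := hQrad ▸ Ideal.le_radical
  have prim : ∀ {x y : RR}, x * y ∈ Q → x ∈ Q ∨ y ∈ P := by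
    intro x y hxy
    rcases (Ideal.isPrimary_iff.mp hQprimary).2 hxy with h | h
    · exact Or.inl h
    · exact Or.inr (hQrad ▸ h)
  have hFP : F ∈ P := Ideal.subset_span (Set.mem_insert_of_mem _ rfl)
  have hexists : ∃ k : ℕ, F ^ k ∈ Q := by
    have : F ∈ Q.radical := hQrad ▸ hFP
    exact Ideal.mem_radical_iff.mp this
  set m := Nat.find hexists with hm
  have hFm : F ^ m ∈ Q := Nat.find_spec hexists
  have hmin : ∀ k, k < m → F ^ k ∉ Q := fun k hk => Nat.find_min hexists hk
  -- Q = (z, F^m)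
  have hQeq : Q = Ideal.span {X 2, F ^ m} := by
    apply le_antisymm
    · -- by induction
      have aux : ∀ k, k ≤ m → Q ≤ Ideal.span {X 2, F ^ k} := by
        intro k
        induction k with
        | zero =>
          intro _
          rw [pow_zero]
          intro q _
          have : (1 : RR) ∈ Ideal.span {X (2 : Fin 4), 1} :=
            Ideal.subset_span (Set.mem_insert_of_mem _ rfl)
          rw [(Ideal.eq_top_iff_one _).mpr this]; trivial
        | succ k ih =>
          intro hk1 q hq
          obtain ⟨u, v, huv⟩ := Ideal.mem_span_pair.mp (ih (by omega) hq)
          have hvFk : F ^ k * v ∈ Q := by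
            have : v * F ^ k = q - u * X 2 := by rw [← huv]; ring
            rw [mul_comm]
            rw [this]
            exact Submodule.sub_mem _ hq (Q.mul_mem_left u hz)
          have hvP : v ∈ P := by
            rcases prim hvFk with h | h
            · exact absurd h (hmin k (by omega))
            · exact h
          obtain ⟨s, t, hst⟩ := Ideal.mem_span_pair.mp hvP
          apply Ideal.mem_span_pair.mpr
          refine ⟨u + s * F ^ k, t, ?_⟩
          rw [← huv, ← hst]
          ring
      exact aux m le_rfl
    · rw [Ideal.span_le]
      rintro x (rfl | rfl)
      · exact hz
      · exact hFm
  -- now show m = e via Jordan-Hölder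
  set A := Localization.AtPrime P with hA
  set M := LocalizedModule P.primeCompl (RR ⧸ Q) with hM
  set π : RR →+* RR ⧸ Q := Ideal.Quotient.mk Q with hπ
  set el : RR → M := fun g => LocalizedModule.mk (π g) 1 with hel
  have hsmul : ∀ (r g : RR), r • el g = el (r * g) := by
    intro r g
    rw [hel]
    simp only
    rw [LocalizedModule.smul'_mk]
    rfl
  have hAsmul : ∀ (r g : RR), algebraMap RR A r • el g = el (r * g) := by
    intro r g
    rw [algebraMap_smul, hsmul]
  have elzero : ∀ g : RR, el g = 0 ↔ g ∈ Q := by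
    intro g
    constructor
    · intro h
      rw [hel] at h
      simp only at h
      rw [← LocalizedModule.zero_mk (1 : P.primeCompl), LocalizedModule.mk_eq] at h
      obtain ⟨u, hu⟩ := h
      simp only [Submonoid.smul_def, OneMemClass.coe_one, one_smul, smul_zero] at hu
      have hπ0 : π ((u : RR) * g) = 0 := by
        rw [← hu]
        rfl
      have hmem : g * (u : RR) ∈ Q := by
        rw [mul_comm]
        exact Ideal.Quotient.eq_zero_iff_mem.mp hπ0
      rcases prim hmem with h | h
      · exact h
      · exact absurd h u.2
    · intro h
      rw [hel]
      simp only
      have : π g = 0 := Ideal.Quotient.eq_zero_iff_mem.mpr h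
      rw [this, LocalizedModule.zero_mk]
  have eladd : ∀ x y : RR, el (x + y) = el x + el y := by
    intro x y
    rw [hel]
    simp only [map_add]
    rw [LocalizedModule.mk_add_mk]
    congr 1 <;> simp
  set N : ℕ → Submodule A M := fun i => Submodule.span A {el (F ^ i)} with hN
  have hmemN : ∀ i, el (F ^ i) ∈ N i := fun i => Submodule.mem_span_singleton_self _
  have hNsucc : ∀ i : ℕ, el (F ^ (i + 1)) = algebraMap RR A F • el (F ^ i) := by
    intro i
    rw [hAsmul]
    congr 1
    ring
  have hNtop : N 0 = ⊤ := by
    rw [eq_top_iff]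
    intro x _
    induction x using LocalizedModule.induction_on with
    | h mm s =>
      obtain ⟨g, rfl⟩ := Ideal.Quotient.mk_surjective mm
      apply Submodule.mem_span_singleton.mpr
      refine ⟨Localization.mk g s, ?_⟩
      rw [hel]
      simp only [pow_zero]
      rw [LocalizedModule.mk_smul_mk, mul_one]
      congr 1
      show g • π 1 = π g
      calc g • π 1 = π (g * 1) := rfl
        _ = π g := by rw [mul_one]
  have hNbot : N m = ⊥ := by
    have h0 : el (F ^ m) = 0 := (elzero _).mpr hFm
    rw [hN]
    simp only
    rw [h0, Submodule.span_zero_singleton]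
  have hNle : ∀ i : ℕ, N (i + 1) ≤ N i := by
    intro i
    rw [hN]
    simp only
    apply Submodule.span_le.mpr
    rw [Set.singleton_subset_iff]
    rw [hNsucc i]
    exact Submodule.smul_mem _ _ (hmemN i)
  have hmaxF : algebraMap RR A F ∈ IsLocalRing.maximalIdeal A := by
    rw [← Localization.AtPrime.map_eq_maximalIdeal]
    exact Ideal.mem_map_of_mem _ hFP
  have keysmul : ∀ (i : ℕ) (cA : A), cA ∈ IsLocalRing.maximalIdeal A →
      cA • el (F ^ i) ∈ N (i + 1) := by
    intro i cA hcA
    rw [← Localization.AtPrime.map_eq_maximalIdeal] at hcA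
    obtain ⟨⟨g, s⟩, hgs⟩ := (IsLocalization.mem_map_algebraMap_iff P.primeCompl A).mp hcA
    -- hgs : cA * algebraMap s = algebraMap g
    have hg : algebraMap RR A (g : RR) • el (F ^ i) ∈ N (i + 1) := by
      obtain ⟨u, v, huv⟩ := Ideal.mem_span_pair.mp (show (g : RR) ∈ P from g.2)
      rw [hAsmul]
      have hrw : (g : RR) * F ^ i = u * X 2 * F ^ i + v * F ^ (i + 1) := by
        rw [← huv]
        ring
      rw [hrw, eladd]
      have h1 : el (u * X 2 * F ^ i) = 0 := by
        apply (elzero _).mpr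
        exact Q.mul_mem_right _ (Q.mul_mem_left u hz)
      rw [h1, zero_add, ← hAsmul]
      exact Submodule.smul_mem _ _ (hmemN (i + 1))
    have hc' : cA = Localization.mk 1 s * (cA * algebraMap RR A (s : RR)) := by
      rw [← mul_assoc, mul_comm (Localization.mk 1 s) cA, mul_assoc]
      rw [← Localization.mk_one_eq_algebraMap, Localization.mk_mul, one_mul, mul_one]
      rw [Localization.mk_self, mul_one]
    rw [hc', mul_smul, hgs]
    exact Submodule.smul_mem _ _ hg
  have hNstall : ∀ i : ℕ, N i = N (i + 1) → N i = ⊥ := by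
    intro i h
    apply Submodule.eq_bot_of_le_smul_of_le_jacobson_bot (IsLocalRing.maximalIdeal A) (N i)
    · exact Submodule.fg_span_singleton _
    · conv_lhs => rw [h]
      rw [hN]
      simp only
      apply Submodule.span_le.mpr
      rw [Set.singleton_subset_iff, hNsucc i]
      exact Submodule.smul_mem_smul hmaxF (hmemN i)
    · exact IsLocalRing.maximalIdeal_le_jacobson ⊥
  have covstep : ∀ i : ℕ, i < m → N (i + 1) ⋖ N i := by
    intro i him
    have hne : N (i + 1) ≠ N i := by
      intro h
      have hbot := hNstall i h.symm
      have : el (F ^ i) = 0 := by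
        have := hmemN i
        rw [hbot, Submodule.mem_bot] at this
        exact this
      exact hmin i him ((elzero _).mp this)
    refine ⟨lt_of_le_of_ne (hNle i) hne, ?_⟩
    intro T h1 h2
    obtain ⟨x, hxT, hxN⟩ := SetLike.exists_of_lt h1
    have hxNi : x ∈ N i := le_of_lt h2 hxT
    obtain ⟨cA, rfl⟩ := Submodule.mem_span_singleton.mp hxNi
    have hcunit : IsUnit cA := by
      by_contra hcu
      exact hxN (keysmul i cA ((IsLocalRing.mem_maximalIdeal _).mpr (mem_nonunits_iff.mpr hcu)))
    obtain ⟨c, rfl⟩ := hcunit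
    have hTel : el (F ^ i) ∈ T := by
      have := T.smul_mem ((c⁻¹ : Aˣ) : A) hxT
      rwa [← mul_smul, Units.inv_mul, one_smul] at this
    have : N i ≤ T := by
      rw [hN]
      simp only
      exact Submodule.span_le.mpr (Set.singleton_subset_iff.mpr hTel)
    exact absurd this (not_le_of_gt h2)
  -- build the composition series of length m
  obtain ⟨s, hh, hl, hlc⟩ := hlen
  have hme : e = m := by
    let t : CompositionSeries (Submodule A M) :=
      { length := m
        toFun := fun i => N (m - (i : ℕ))
        step := fun i => by
          have hi : (i : ℕ) < m := i.isLt
          show N (m - (i.castSucc : ℕ)) ⋖ N (m - (i.succ : ℕ))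
          have h1 : m - (i.castSucc : ℕ) = (m - (i.succ : ℕ)) + 1 := by
            rw [Fin.coe_castSucc, Fin.val_succ]
            omega
          rw [h1]
          apply covstep
          rw [Fin.val_succ]
          omega }
    have hth : t.head = ⊥ := by
      show N (m - ((0 : Fin (m + 1)) : ℕ)) = ⊥
      simpa using hNbot
    have htl : t.last = ⊤ := by
      show N (m - ((Fin.last m : Fin (m + 1)) : ℕ)) = ⊤
      rw [Fin.val_last, Nat.sub_self]
      exact hNtop
    have hequiv := CompositionSeries.jordan_holder s t (by rw [hh, hth]) (by rw [hl, htl])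
    have := hequiv.length_eq
    rw [hlc] at this
    exact this
  rw [hQeq, hme]



/-- Let `F ∈ ℂ[x,y,t]` be an irreducible form of degree `d ≥ 1`, let
`𝒫 = (z, F)` (a homogeneous prime ideal of `P = ℂ[x,y,z,t]`), and let `Q` be a homogeneous
`𝒫`-primary ideal of multiplicity `e ≥ 1` (the length of `(P/Q)_𝒫`, expressed by a
composition series).  Then there is a nonempty Zariski-open set of `(α,β,γ) ∈ ℂ³`
(the complement of the zero locus of a nonzero polynomial) such that for
`ℓ = αx + βy + γz + t`: if `z ∈ Q + ℓP` then `(Q + ℓP)ₙ = (zP + F^e·P + ℓP)ₙ` for all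
sufficiently large `n`. -/
theorem stmt_11 (F : MvPolynomial (Fin 4) ℂ) (d : ℕ) (hd : 1 ≤ d)
    (hFd : F ∈ homogeneousSubmodule (Fin 4) ℂ d)
    (hFz : (2 : Fin 4) ∉ F.vars)
    (hFirr : Irreducible F)
    [hPP : (curvePrime F).IsPrime]
    (Q : Ideal (MvPolynomial (Fin 4) ℂ))
    (hQhom : ∀ p ∈ Q, ∀ n : ℕ, homogeneousComponent n p ∈ Q)
    (hQprimary : Q.IsPrimary) (hQrad : Q.radical = curvePrime F)
    (e : ℕ) (he : 1 ≤ e)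
    (hlen : ∃ s : CompositionSeries (Submodule (Localization.AtPrime (curvePrime F))
        (LocalizedModule (curvePrime F).primeCompl (MvPolynomial (Fin 4) ℂ ⧸ Q))),
      s.head = ⊥ ∧ s.last = ⊤ ∧ s.length = e) :
    ∃ p : MvPolynomial (Fin 3) ℂ, p ≠ 0 ∧
      ∀ α β γ : ℂ, eval (![α, β, γ] : Fin 3 → ℂ) p ≠ 0 →
        (X 2 ∈ Q ⊔ Ideal.span {lform α β γ} →
          ∃ N : ℕ, ∀ n : ℕ, N ≤ n →
            Submodule.restrictScalars ℂ (Q ⊔ Ideal.span {lform α β γ}) ⊓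
                homogeneousSubmodule (Fin 4) ℂ n =
              Submodule.restrictScalars ℂ (Ideal.span {X 2, F ^ e, lform α β γ}) ⊓
                homogeneousSubmodule (Fin 4) ℂ n) := by
  obtain ⟨p, hpne, hpgen⟩ := generic_lform F d hd hFd hFz
  refine ⟨p, hpne, ?_⟩
  intro α β γ hpeval hzmem
  -- first: z ∈ Q
  have hℓhom : lform α β γ ∈ homogeneousSubmodule (Fin 4) ℂ 1 := by
    refine Submodule.add_mem _ (Submodule.add_mem _ (Submodule.add_mem _ ?_ ?_) ?_)
      (isHomogeneous_X _ _) <;>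
    · simpa using (isHomogeneous_C (Fin 4) _).mul (isHomogeneous_X ℂ _)
  have hzQ : X 2 ∈ Q := by
    obtain ⟨q, hq, w, hw, hqw⟩ := Submodule.mem_sup.mp hzmem
    obtain ⟨g, hg⟩ := Ideal.mem_span_singleton'.mp hw
    have heq : X (2 : Fin 4) = q + g * lform α β γ := by rw [hg, hqw]
    have h1 := congrArg (homogeneousComponent 1) heq
    rw [homogeneousComponent_of_mem (isHomogeneous_X ℂ (2 : Fin 4)), if_pos rfl,
      map_add, hc_mul_homog g _ hℓhom 1 le_rfl, homogeneousComponent_zero] at h1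
    set c0 := coeff 0 g with hc0
    by_cases hc : c0 = 0
    · rw [hc, map_zero, zero_mul, add_zero] at h1
      rw [h1]
      exact hQhom q hq 1
    · exfalso
      apply hpgen α β γ hpeval
      have hq1 : homogeneousComponent 1 q ∈ Q := hQhom q hq 1
      have hℓeq : lform α β γ = C c0⁻¹ * (X 2 - homogeneousComponent 1 q) := by
        rw [h1]
        rw [show homogeneousComponent 1 q + C c0 * lform α β γ - homogeneousComponent 1 q
          = C c0 * lform α β γ by ring]
        rw [← mul_assoc, ← C_mul, inv_mul_cancel₀ hc, C_1, one_mul]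
      rw [hℓeq]
      have hzP : X (2 : Fin 4) ∈ curvePrime F := Ideal.subset_span (Set.mem_insert _ _)
      have hqP : homogeneousComponent 1 q ∈ curvePrime F := (hQrad ▸ Ideal.le_radical) hq1
      exact Ideal.mul_mem_left _ _ (Ideal.sub_mem _ hzP hqP)
  have hQeq := primary_structure F Q hQprimary hQrad e hlen hzQ
  have hIeq : Q ⊔ Ideal.span {lform α β γ} = Ideal.span {X 2, F ^ e, lform α β γ} := by
    rw [hQeq, ← Ideal.span_union]
    congr 1
    ext x
    simp only [Set.mem_union, Set.mem_insert_iff, Set.mem_singleton_iff]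
    tauto
  exact ⟨0, fun n _ => by rw [hIeq]⟩
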